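/- Let (X,d) be a non-connected Robinson space with d(x,y) > 0 for all distinct x,y ∈ X. Let C_1,…,C_k be the connected components of G_{<δ*}, and let I := {i ∈ {1,…,k} : C_i is not a connected component of G_{δ*}}. Then |I| ≠ 1. Moreover, if I ≠ ∅, then: S_0 := ∪_{i∈I} C_i is a connected component of G_{δ*} with diam(S_0) > δ*; the maximal mmodules of (X,d) are exactly the sets X ∖ C_j for j ∉ I together with X ∖ S_0; and the graph H with vertex set I and an edge between distinct i,i' whenever there exist x ∈ C_i and y ∈ C_{i'} with d(x,y) > δ*, is connected and bipartite. -/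

import Mathlib

structure Dissim (X : Type*) where
  d : X → X → ℝ
  symm : ∀ x y, d x y = d y x
  nonneg : ∀ x y, 0 ≤ d x y
  self : ∀ x, d x x = 0

variable {X : Type*}

def Compatible (D : Dissim X) (lt : X → X → Prop) : Prop :=
  ∀ x y z : X, lt x y → lt y z → D.d x y ≤ D.d x z ∧ D.d y z ≤ D.d x z

def IsCompatOrder (D : Dissim X) (lt : X → X → Prop) : Prop :=
  IsStrictTotalOrder X lt ∧ Compatible D lt

def Robinson (D : Dissim X) : Prop :=
  ∃ lt : X → X → Prop, IsCompatOrder D lt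

def IsMmodule (D : Dissim X) (M : Set X) : Prop :=
  ∀ z ∉ M, ∀ x ∈ M, ∀ y ∈ M, D.d z x = D.d z y

def IsInterval (lt : X → X → Prop) (I : Set X) : Prop :=
  ∀ a b c : X, lt a b → lt b c → a ∈ I → c ∈ I → b ∈ I

def IsBlock (D : Dissim X) (Y : Set X) : Prop :=
  ∀ lt : X → X → Prop, IsCompatOrder D lt → IsInterval lt Y

noncomputable def diam (D : Dissim X) (Y : Set X) : ℝ :=
  sSup (Set.image2 D.d Y Y)

def Gdelta (D : Dissim X) (δ : ℝ) : SimpleGraph X where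
  Adj x y := x ≠ y ∧ D.d x y ≠ δ
  symm := by
    constructor
    rintro x y ⟨hxy, hd⟩
    exact ⟨hxy.symm, by rw [D.symm]; exact hd⟩
  loopless := by constructor; rintro x ⟨h, -⟩; exact h rfl

def Gle (D : Dissim X) (δ : ℝ) : SimpleGraph X where
  Adj x y := x ≠ y ∧ D.d x y ≤ δ
  symm := by
    constructor
    rintro x y ⟨hxy, hd⟩
    exact ⟨hxy.symm, by rw [D.symm]; exact hd⟩
  loopless := by constructor; rintro x ⟨h, -⟩; exact h rfl

def Glt (D : Dissim X) (δ : ℝ) : SimpleGraph X where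
  Adj x y := x ≠ y ∧ D.d x y < δ
  symm := by
    constructor
    rintro x y ⟨hxy, hd⟩
    exact ⟨hxy.symm, by rw [D.symm]; exact hd⟩
  loopless := by constructor; rintro x ⟨h, -⟩; exact h rfl

def IsCompOf {V : Type*} (G : SimpleGraph V) (C : Set V) : Prop :=
  ∃ x : V, C = {y | G.Reachable x y}

def MMax (D : Dissim X) : Set (Set X) :=
  {M | IsMmodule D M ∧ M ≠ Set.univ ∧
    ∀ M' : Set X, IsMmodule D M' → M' ≠ Set.univ → M ⊆ M' → M = M'}

def IsPartition {α : Type*} (P : Set (Set α)) : Prop :=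
  (∀ A ∈ P, A.Nonempty) ∧
  (∀ A ∈ P, ∀ B ∈ P, A ≠ B → Disjoint A B) ∧
  ⋃₀ P = Set.univ

def IsCopartition {α : Type*} (P : Set (Set α)) : Prop :=
  IsPartition ((fun M => Mᶜ) '' P)

def SimpleGraph.restrictTo {V : Type*} (G : SimpleGraph V) (S : Set V) : SimpleGraph V where
  Adj x y := x ∈ S ∧ y ∈ S ∧ G.Adj x y
  symm := by constructor; rintro x y ⟨hx, hy, h⟩; exact ⟨hy, hx, h.symm⟩
  loopless := by constructor; rintro x ⟨-, -, h⟩; exact G.loopless.irrefl x h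

def ConnectedWithin {V : Type*} (G : SimpleGraph V) (S : Set V) : Prop :=
  S.Nonempty ∧ ∀ x ∈ S, ∀ y ∈ S, (G.restrictTo S).Reachable x y

def IsCompWithin {V : Type*} (G : SimpleGraph V) (S : Set V) (C : Set V) : Prop :=
  ∃ x ∈ S, C = {y | (G.restrictTo S).Reachable x y}

def IsStrictTotalOrderOn {α : Type*} (S : Set α) (lt : α → α → Prop) : Prop :=
  (∀ x ∈ S, ¬ lt x x) ∧
  (∀ x ∈ S, ∀ y ∈ S, ∀ z ∈ S, lt x y → lt y z → lt x z) ∧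
  (∀ x ∈ S, ∀ y ∈ S, x ≠ y → (lt x y ∨ lt y x) ∧ ¬ (lt x y ∧ lt y x))

def CompatibleOn (D : Dissim X) (S : Set X) (lt : X → X → Prop) : Prop :=
  ∀ x ∈ S, ∀ y ∈ S, ∀ z ∈ S, lt x y → lt y z → D.d x y ≤ D.d x z ∧ D.d y z ≤ D.d x z

def IsCompatOrderOn (D : Dissim X) (S : Set X) (lt : X → X → Prop) : Prop :=
  IsStrictTotalOrderOn S lt ∧ CompatibleOn D S lt

def FlatOn (D : Dissim X) (S : Set X) : Prop :=
  ∃ lt : X → X → Prop, IsCompatOrderOn D S lt ∧ (∃ x ∈ S, ∃ y ∈ S, lt x y) ∧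
    ∀ lt' : X → X → Prop, IsCompatOrderOn D S lt' →
      (∀ x ∈ S, ∀ y ∈ S, (lt' x y ↔ lt x y)) ∨ (∀ x ∈ S, ∀ y ∈ S, (lt' x y ↔ lt y x))

def Flat (D : Dissim X) : Prop :=
  ∃ lt : X → X → Prop, IsCompatOrder D lt ∧ (∃ x y : X, lt x y) ∧
    ∀ lt' : X → X → Prop, IsCompatOrder D lt' →
      (∀ x y : X, lt' x y ↔ lt x y) ∨ (∀ x y : X, lt' x y ↔ lt y x)

def IsCopointAt (D : Dissim X) (p : X) (C : Set X) : Prop :=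
  IsMmodule D C ∧ C.Nonempty ∧ p ∉ C ∧
  ∀ C' : Set X, IsMmodule D C' → p ∉ C' → C ⊆ C' → C = C'

def bigGraph (D : Dissim X) (δ : ℝ) (I : Set (Set X)) : SimpleGraph (Set X) where
  Adj C C' := C ∈ I ∧ C' ∈ I ∧ C ≠ C' ∧ ∃ x ∈ C, ∃ y ∈ C', δ < D.d x y
  symm := by
    constructor
    rintro C C' ⟨hC, hC', hne, x, hx, y, hy, hd⟩
    exact ⟨hC', hC, hne.symm, y, hy, x, hx, by rw [D.symm]; exact hd⟩
  loopless := by constructor; rintro C ⟨-, -, hne, -⟩; exact hne rfl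

/-!
The components of `G_{<δ}` are intervals of a compatible order, and such a component `C` lies in
`I` iff it contains `a` with a partner `b ∉ C` at distance `> δ`; the component of `b` is then in
`I` too, so `|I| ≠ 1`. Let `m`, `M` be the extreme points of `S₀ = ⋃ I`. Pushing a long pair of
`C ∈ I` outwards to `m` or `M` gives an `H`-edge from `C` to the component of `m` or of `M`, so
`H` is connected and `S₀` is a component of `G_δ`. A component of `G_{<δ}` never has long pairs
pointing both left and right: a point `q` outside its `G_δ`-component is at distance exactly `δ`
from all of it, which compatibility turns into `q` lying between the two pairs, hence inside.
Colouring `C ∈ I` by whether it has a rightward long pair therefore 2-colours `H`. Independently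
of the order, the maximal mmodules are the complements of the components of a disconnected `G_δ`.
-/

open Set

namespace SimpleGraph

variable {V : Type*} {G : SimpleGraph V}

lemma Reachable.mem_of_adj_mem {S : Set V} (hS : ∀ a b, G.Adj a b → a ∈ S → b ∈ S) {u v : V}
    (h : G.Reachable u v) (hu : u ∈ S) : v ∈ S := by
  obtain ⟨w⟩ := h
  by_contra hv
  obtain ⟨d, -, hd, hd'⟩ := w.exists_boundary_dart S hu hv
  exact hd' (hS _ _ d.adj hd)

lemma exists_not_reachable_of_not_preconnected (h : ¬ G.Preconnected) (x : V) :
    ∃ q, ¬ G.Reachable x q := by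
  by_contra! hx
  exact h fun u v => (hx u).symm.trans (hx v)

end SimpleGraph

namespace IsCompOf

variable {V : Type*} {G : SimpleGraph V} {C K : Set V} {a b x : V}

lemma nonempty (hC : IsCompOf G C) : C.Nonempty := by
  obtain ⟨x, rfl⟩ := hC
  exact ⟨x, SimpleGraph.Reachable.refl x⟩

lemma reachable (hC : IsCompOf G C) (ha : a ∈ C) (hb : b ∈ C) : G.Reachable a b := by
  obtain ⟨x, rfl⟩ := hC
  exact (ha : G.Reachable x a).symm.trans hb

lemma mem_of_reachable (hC : IsCompOf G C) (ha : a ∈ C) (h : G.Reachable a b) : b ∈ C := by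
  obtain ⟨x, rfl⟩ := hC
  exact (ha : G.Reachable x a).trans h

lemma mem_of_adj (hC : IsCompOf G C) (ha : a ∈ C) (h : G.Adj a b) : b ∈ C :=
  hC.mem_of_reachable ha h.reachable

lemma eq_of_mem (hC : IsCompOf G C) (hK : IsCompOf G K) (hxC : x ∈ C) (hxK : x ∈ K) :
    C = K := by
  ext y
  exact ⟨fun hy => hK.mem_of_reachable hxK (hC.reachable hxC hy),
    fun hy => hC.mem_of_reachable hxC (hK.reachable hxK hy)⟩

lemma of_adj_mem (hx : x ∈ C) (hconn : ∀ y ∈ C, G.Reachable x y)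
    (hclosed : ∀ a b, G.Adj a b → a ∈ C → b ∈ C) : IsCompOf G C :=
  ⟨x, Subset.antisymm hconn fun _ hy => SimpleGraph.Reachable.mem_of_adj_mem hclosed hy hx⟩

end IsCompOf

variable {D : Dissim X} {δ : ℝ}

lemma Glt_le_Gdelta : Glt D δ ≤ Gdelta D δ :=
  fun _ _ h => ⟨h.1, h.2.ne⟩

lemma restrictTo_bigGraph (I : Set (Set X)) : (bigGraph D δ I).restrictTo I = bigGraph D δ I := by
  ext C C'
  exact ⟨fun h => h.2.2, fun h => ⟨h.1, h.2.1, h⟩⟩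

lemma le_diam [Finite X] {Y : Set X} {a b : X} (ha : a ∈ Y) (hb : b ∈ Y) :
    D.d a b ≤ diam D Y :=
  le_csSup (toFinite _).bddAbove (mem_image2_of_mem ha hb)

namespace IsCompOf

variable {C K : Set X} {a b : X}

lemma le_dist (hC : IsCompOf (Glt D δ) C) (ha : a ∈ C) (hb : b ∉ C) : δ ≤ D.d a b := by
  by_contra! h
  exact hb (hC.mem_of_adj ha ⟨fun hab => hb (hab ▸ ha), h⟩)

lemma reachable_Gdelta (hC : IsCompOf (Glt D δ) C) (ha : a ∈ C) (hb : b ∈ C) :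
    (Gdelta D δ).Reachable a b :=
  (hC.reachable ha hb).mono Glt_le_Gdelta

lemma mem_of_dist_ne (hK : IsCompOf (Gdelta D δ) K) (ha : a ∈ K) (hab : D.d a b ≠ δ) :
    b ∈ K := by
  by_contra hb
  exact hb (hK.mem_of_adj ha ⟨fun h => hb (h ▸ ha), hab⟩)

lemma dist_eq (hK : IsCompOf (Gdelta D δ) K) (ha : a ∈ K) (hb : b ∉ K) : D.d a b = δ := by
  by_contra hab
  exact hb (hK.mem_of_dist_ne ha hab)

end IsCompOf

section MaximalMmodules

variable {K M : Set X}

lemma isMmodule_compl (hK : IsCompOf (Gdelta D δ) K) : IsMmodule D Kᶜ := by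
  intro z hz x hx y hy
  rw [hK.dist_eq (not_not.mp hz) hx, hK.dist_eq (not_not.mp hz) hy]

lemma compl_mem_MMax (hK : IsCompOf (Gdelta D δ) K) {q : X} (hq : q ∉ K) : Kᶜ ∈ MMax D := by
  obtain ⟨p, hp⟩ := hK.nonempty
  refine ⟨isMmodule_compl hK, (ne_univ_iff_exists_notMem _).mpr ⟨p, fun h => h hp⟩, ?_⟩
  intro M hM hMne hKM
  obtain ⟨w, hw⟩ := (ne_univ_iff_exists_notMem M).mp hMne
  have hwK : w ∈ K := by_contra fun h => hw (hKM h)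
  -- A `Gdelta`-edge `a b` from `K \ M` into `M` would have `d(a, b) = d(a, q) = δ`, as `M` is an
  -- mmodule containing `q`.
  have hclosed : ∀ a b, (Gdelta D δ).Adj a b → a ∈ Kᶜ ∪ Mᶜ → b ∈ Kᶜ ∪ Mᶜ := by
    rintro a b hab ha
    by_cases hbK : b ∈ K
    · have haK : a ∈ K := hK.mem_of_adj hbK hab.symm
      refine Or.inr fun hbM => hab.2 ?_
      rw [hM a (ha.resolve_left (not_not.mpr haK)) b hbM q (hKM hq), hK.dist_eq haK hq]
    · exact Or.inl hbK
  refine Subset.antisymm hKM fun x hx hxK => ?_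
  exact (hK.reachable hwK hxK).mem_of_adj_mem hclosed (Or.inr hw) |>.elim (· hxK) (· hx)

lemma isMmodule_union_compl (hM : IsMmodule D M) (hK : IsCompOf (Gdelta D δ) K) {x : X}
    (hxM : x ∈ M) (hxK : x ∉ K) : IsMmodule D (M ∪ Kᶜ) := by
  intro z hz
  have hzK : z ∈ K := by_contra fun h => hz (Or.inr h)
  have hδ : ∀ t ∈ M ∪ Kᶜ, D.d z t = δ := by
    rintro t (ht | ht)
    · rw [hM z (fun h => hz (Or.inl h)) t ht x hxM, hK.dist_eq hzK hxK]
    · exact hK.dist_eq hzK ht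
  intro s hs t ht
  rw [hδ s hs, hδ t ht]

lemma exists_eq_compl_of_mem_MMax (hpre : ¬ (Gdelta D δ).Preconnected) (hM : M ∈ MMax D) :
    ∃ K, IsCompOf (Gdelta D δ) K ∧ M = Kᶜ := by
  obtain ⟨hMm, hMne, hMmax⟩ := hM
  obtain ⟨w, hw⟩ := (ne_univ_iff_exists_notMem M).mp hMne
  obtain ⟨q, hq⟩ := SimpleGraph.exists_not_reachable_of_not_preconnected hpre w
  have hKw : IsCompOf (Gdelta D δ) {y | (Gdelta D δ).Reachable w y} := ⟨w, rfl⟩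
  by_cases hMw : ∃ x ∈ M, x ∉ {y | (Gdelta D δ).Reachable w y}
  · obtain ⟨x, hxM, hxK⟩ := hMw
    refine ⟨_, hKw, ((compl_mem_MMax hKw hq).2.2 M hMm hMne ?_).symm⟩
    have hunion := hMmax _ (isMmodule_union_compl hMm hKw hxM hxK)
      ((ne_univ_iff_exists_notMem _).mpr ⟨w, fun h => h.elim hw (· (.refl w))⟩) subset_union_left
    exact hunion ▸ subset_union_right
  · push Not at hMw
    have hKq : IsCompOf (Gdelta D δ) {y | (Gdelta D δ).Reachable q y} := ⟨q, rfl⟩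
    refine ⟨_, hKq, hMmax _ (isMmodule_compl hKq) ?_ fun x hxM hxq => ?_⟩
    · exact (ne_univ_iff_exists_notMem _).mpr ⟨q, fun h => h (.refl q)⟩
    · exact hq ((hMw x hxM).trans (hxq : (Gdelta D δ).Reachable q x).symm)

lemma MMax_eq_image_compl (hpre : ¬ (Gdelta D δ).Preconnected) :
    MMax D = compl '' {K | IsCompOf (Gdelta D δ) K} := by
  ext M
  constructor
  · intro hM
    obtain ⟨K, hK, rfl⟩ := exists_eq_compl_of_mem_MMax hpre hM
    exact ⟨K, hK, rfl⟩
  · rintro ⟨K, hK, rfl⟩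
    obtain ⟨p, hp⟩ := hK.nonempty
    obtain ⟨q, hq⟩ := SimpleGraph.exists_not_reachable_of_not_preconnected hpre p
    exact compl_mem_MMax hK fun hqK => hq (hK.reachable hp hqK)

end MaximalMmodules

def crossedComps (D : Dissim X) (δ : ℝ) : Set (Set X) :=
  {C | IsCompOf (Glt D δ) C ∧ ¬ IsCompOf (Gdelta D δ) C}

section CrossedComps

variable {C C' : Set X}

lemma mem_crossedComps_iff (hC : IsCompOf (Glt D δ) C) :
    C ∈ crossedComps D δ ↔ ∃ a ∈ C, ∃ b ∉ C, δ < D.d a b := by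
  refine ⟨fun h => ?_, fun ⟨a, ha, b, hb, hd⟩ => ⟨hC, fun hK => hb (hK.mem_of_dist_ne ha hd.ne')⟩⟩
  by_contra! hshort
  obtain ⟨x, hx⟩ := hC.nonempty
  refine h.2 (IsCompOf.of_adj_mem hx (fun y hy => hC.reachable_Gdelta hx hy) ?_)
  intro a b hab ha
  by_contra hb
  exact hab.2 ((hshort a ha b hb).antisymm (hC.le_dist ha hb))

lemma exists_long_pair_of_mem_crossedComps (hC : C ∈ crossedComps D δ) :
    ∃ a ∈ C, ∃ b ∉ C, δ < D.d a b ∧ {y | (Glt D δ).Reachable b y} ∈ crossedComps D δ := by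
  obtain ⟨a, ha, b, hb, hd⟩ := (mem_crossedComps_iff hC.1).mp hC
  refine ⟨a, ha, b, hb, hd, (mem_crossedComps_iff ⟨b, rfl⟩).mpr ⟨b, .refl b, a, ?_, ?_⟩⟩
  · exact fun hba => hb (hC.1.mem_of_reachable ha (SimpleGraph.Reachable.symm hba))
  · rwa [D.symm]

lemma ncard_crossedComps_ne_one : (crossedComps D δ).ncard ≠ 1 := by
  intro h
  obtain ⟨C, hC⟩ := ncard_eq_one.mp h
  obtain ⟨-, -, b, hb, -, hbC⟩ := exists_long_pair_of_mem_crossedComps (hC ▸ mem_singleton C)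
  rw [hC, mem_singleton_iff] at hbC
  exact hb (hbC ▸ SimpleGraph.Reachable.refl b)

lemma mem_sUnion_crossedComps_of_adj {p q : X} (hp : p ∈ ⋃₀ crossedComps D δ)
    (hpq : (Gdelta D δ).Adj p q) : q ∈ ⋃₀ crossedComps D δ := by
  obtain ⟨C, hC, hpC⟩ := hp
  by_contra hq
  have hCq : IsCompOf (Glt D δ) {y | (Glt D δ).Reachable q y} := ⟨q, rfl⟩
  have hqq : q ∈ {y | (Glt D δ).Reachable q y} := SimpleGraph.Reachable.refl q
  have hKq : IsCompOf (Gdelta D δ) {y | (Glt D δ).Reachable q y} :=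
    by_contra fun h => hq ⟨_, ⟨hCq, h⟩, hqq⟩
  exact hq ⟨C, hC, hC.1.eq_of_mem hCq hpC (hKq.mem_of_adj hqq hpq.symm) ▸ hqq⟩

lemma reachable_of_bigGraph_adj (hCC' : (bigGraph D δ (crossedComps D δ)).Adj C C') {x y : X}
    (hx : x ∈ C) (hy : y ∈ C') : (Gdelta D δ).Reachable x y := by
  obtain ⟨hC, hC', hne, a, ha, b, hb, hd⟩ := hCC'
  have hab : (Gdelta D δ).Adj a b :=
    ⟨fun h => hne (hC.1.eq_of_mem hC'.1 ha (h ▸ hb)), hd.ne'⟩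
  exact ((hC.1.reachable_Gdelta hx ha).trans hab.reachable).trans (hC'.1.reachable_Gdelta hb hy)

lemma reachable_of_bigGraph_reachable
    (hCC' : (bigGraph D δ (crossedComps D δ)).Reachable C C') (hC : C ∈ crossedComps D δ)
    {x y : X} (hx : x ∈ C) (hy : y ∈ C') : (Gdelta D δ).Reachable x y := by
  let S : Set (Set X) := {K | ∀ y ∈ K, (Gdelta D δ).Reachable x y}
  have hclosed : ∀ K K', (bigGraph D δ (crossedComps D δ)).Adj K K' → K ∈ S → K' ∈ S := by
    intro K K' hKK' hK y hy
    obtain ⟨a, ha⟩ := hKK'.1.1.nonempty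
    exact (hK a ha).trans (reachable_of_bigGraph_adj hKK' ha hy)
  exact hCC'.mem_of_adj_mem hclosed (fun _ hy => hC.1.reachable_Gdelta hx hy) y hy

lemma isCompOf_sUnion_crossedComps
    (hconn : ConnectedWithin (bigGraph D δ (crossedComps D δ)) (crossedComps D δ)) :
    IsCompOf (Gdelta D δ) (⋃₀ crossedComps D δ) := by
  obtain ⟨C₀, hC₀⟩ := hconn.1
  obtain ⟨x, hx⟩ := hC₀.1.nonempty
  refine IsCompOf.of_adj_mem ⟨C₀, hC₀, hx⟩ ?_
    fun _ _ hpq hp => mem_sUnion_crossedComps_of_adj hp hpq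
  rintro y ⟨C, hC, hy⟩
  have hreach := hconn.2 C₀ hC₀ C hC
  rw [restrictTo_bigGraph] at hreach
  exact reachable_of_bigGraph_reachable hreach hC₀ hx hy

lemma setOf_isCompOf_Gdelta_eq (hS : IsCompOf (Gdelta D δ) (⋃₀ crossedComps D δ)) :
    {K | IsCompOf (Gdelta D δ) K} =
      ({C | IsCompOf (Glt D δ) C} \ crossedComps D δ) ∪ {⋃₀ crossedComps D δ} := by
  ext K
  constructor
  · intro hK
    obtain ⟨z, hz⟩ := hK.nonempty
    by_cases hzS : z ∈ ⋃₀ crossedComps D δ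
    · exact Or.inr (hK.eq_of_mem hS hz hzS)
    · have hCz : IsCompOf (Glt D δ) {y | (Glt D δ).Reachable z y} := ⟨z, rfl⟩
      have hzz : z ∈ {y | (Glt D δ).Reachable z y} := SimpleGraph.Reachable.refl z
      have hnot : {y | (Glt D δ).Reachable z y} ∉ crossedComps D δ := fun h => hzS ⟨_, h, hzz⟩
      have hKz : IsCompOf (Gdelta D δ) {y | (Glt D δ).Reachable z y} :=
        by_contra fun h => hnot ⟨hCz, h⟩
      exact Or.inl (hK.eq_of_mem hKz hz hzz ▸ ⟨hCz, hnot⟩)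
  · rintro (⟨hC, hnot⟩ | rfl)
    · exact by_contra fun h => hnot ⟨hC, h⟩
    · exact hS

lemma lt_diam_sUnion_crossedComps [Finite X] (hne : (crossedComps D δ).Nonempty) :
    δ < diam D (⋃₀ crossedComps D δ) := by
  obtain ⟨C, hC⟩ := hne
  obtain ⟨a, ha, b, -, hd, hbC⟩ := exists_long_pair_of_mem_crossedComps hC
  exact hd.trans_le (le_diam ⟨C, hC, ha⟩ ⟨_, hbC, SimpleGraph.Reachable.refl b⟩)

end CrossedComps

section Robinson

variable [LinearOrder X]

lemma Compatible.dist_le_of_mem_uIcc (hc : Compatible D (· < ·)) {a b c : X}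
    (h : b ∈ uIcc a c) : D.d a b ≤ D.d a c := by
  rcases le_total a c with hac | hca
  · obtain ⟨hab, hbc⟩ := (uIcc_of_le hac ▸ h : b ∈ Icc a c)
    rcases hab.eq_or_lt with rfl | hab
    · rw [D.self]; exact D.nonneg _ _
    rcases hbc.eq_or_lt with rfl | hbc
    · exact le_rfl
    exact (hc a b c hab hbc).1
  · obtain ⟨hcb, hba⟩ := (uIcc_of_ge hca ▸ h : b ∈ Icc c a)
    rcases hba.eq_or_lt with rfl | hba
    · rw [D.self]; exact D.nonneg _ _
    rcases hcb.eq_or_lt with rfl | hcb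
    · exact le_rfl
    rw [D.symm a b, D.symm a c]
    exact (hc c b a hcb hba).2

lemma IsCompOf.ordConnected_of_compatible (hc : Compatible D (· < ·)) {C : Set X}
    (hC : IsCompOf (Glt D δ) C) : C.OrdConnected := by
  -- A `Glt`-walk from `a` to `c` jumps over `z` along an edge `u v`, and then `d(u, z) ≤ d(u, v)`.
  have key : ∀ {a c : X} (w : (Glt D δ).Walk a c) (z : X), a < z → z < c →
      (Glt D δ).Reachable a z := by
    intro a c w
    induction w with
    | nil => exact fun z h1 h2 => absurd (h1.trans h2) (lt_irrefl _)
    | @cons u v c huv _ ih =>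
      intro z huz hzc
      rcases lt_trichotomy z v with hzv | rfl | hvz
      · exact SimpleGraph.Adj.reachable ⟨huz.ne, (hc u z v huz hzv).1.trans_lt huv.2⟩
      · exact huv.reachable
      · exact huv.reachable.trans (ih z hvz hzc)
  refine ⟨fun x hx y hy z ⟨hxz, hzy⟩ => ?_⟩
  rcases hxz.eq_or_lt with rfl | hxz
  · exact hx
  rcases hzy.eq_or_lt with rfl | hzy
  · exact hy
  obtain ⟨w⟩ := hC.reachable hx hy
  exact hC.mem_of_reachable hx (key w z hxz hzy)

variable {C C' Cm CM : Set X}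

lemma bigGraph_adj_of_mem_uIcc (hc : Compatible D (· < ·)) (hC : C ∈ crossedComps D δ)
    {a b t : X} (ha : a ∈ C) (hb : b ∉ C) (hd : δ < D.d a b) (hC' : C' ∈ crossedComps D δ)
    (ht : t ∈ C') (hbt : b ∈ uIcc a t) : (bigGraph D δ (crossedComps D δ)).Adj C C' := by
  have htC : t ∉ C := fun htC => hb ((hC.1.ordConnected_of_compatible hc).uIcc_subset ha htC hbt)
  exact ⟨hC, hC', fun h => htC (h ▸ ht), a, ha, t, ht, hd.trans_le (hc.dist_le_of_mem_uIcc hbt)⟩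

lemma bigGraph_adj_or_adj_of_extremes (hc : Compatible D (· < ·)) {m M : X}
    (hCm : Cm ∈ crossedComps D δ) (hm : m ∈ Cm) (hCM : CM ∈ crossedComps D δ) (hM : M ∈ CM)
    (hbounds : ∀ b ∈ ⋃₀ crossedComps D δ, m ≤ b ∧ b ≤ M) (hC : C ∈ crossedComps D δ) :
    (bigGraph D δ (crossedComps D δ)).Adj C Cm ∨ (bigGraph D δ (crossedComps D δ)).Adj C CM := by
  obtain ⟨a, ha, b, hb, hd, hbC⟩ := exists_long_pair_of_mem_crossedComps hC
  obtain ⟨hmb, hbM⟩ := hbounds b ⟨_, hbC, SimpleGraph.Reachable.refl b⟩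
  rcases lt_or_gt_of_ne (fun h : a = b => hb (h ▸ ha)) with hab | hba
  · exact Or.inr (bigGraph_adj_of_mem_uIcc hc hC ha hb hd hCM hM (Icc_subset_uIcc ⟨hab.le, hbM⟩))
  · exact Or.inl (bigGraph_adj_of_mem_uIcc hc hC ha hb hd hCm hm (Icc_subset_uIcc' ⟨hmb, hba.le⟩))

lemma connectedWithin_bigGraph [Finite X] (hc : Compatible D (· < ·))
    (hne : (crossedComps D δ).Nonempty) :
    ConnectedWithin (bigGraph D δ (crossedComps D δ)) (crossedComps D δ) := by
  have hS : (⋃₀ crossedComps D δ).Nonempty := by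
    obtain ⟨C, hC⟩ := hne
    obtain ⟨x, hx⟩ := hC.1.nonempty
    exact ⟨x, C, hC, hx⟩
  obtain ⟨m, ⟨Cm, hCm, hm⟩, hmin⟩ := exists_min_image _ id (toFinite _) hS
  obtain ⟨M, ⟨CM, hCM, hM⟩, hmax⟩ := exists_max_image _ id (toFinite _) hS
  have hadj : ∀ C ∈ crossedComps D δ, (bigGraph D δ (crossedComps D δ)).Adj C Cm ∨
      (bigGraph D δ (crossedComps D δ)).Adj C CM := fun C hC =>
    bigGraph_adj_or_adj_of_extremes hc hCm hm hCM hM (fun b hb => ⟨hmin b hb, hmax b hb⟩) hC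
  have hmM := (hadj Cm hCm).resolve_left (SimpleGraph.irrefl _)
  have hreach : ∀ C ∈ crossedComps D δ, (bigGraph D δ (crossedComps D δ)).Reachable C Cm :=
    fun C hC => (hadj C hC).elim (·.reachable) (·.reachable.trans hmM.symm.reachable)
  refine ⟨hne, fun C hC C' hC' => ?_⟩
  rw [restrictTo_bigGraph]
  exact (hreach C hC).trans (hreach C' hC').symm

def rightwardComps (D : Dissim X) (δ : ℝ) : Set (Set X) :=
  {C ∈ crossedComps D δ | ∃ x ∈ C, ∃ y ∉ C, x < y ∧ δ < D.d x y}

lemma notMem_rightwardComps_of_leftward_pair (hc : Compatible D (· < ·))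
    (hpre : ¬ (Gdelta D δ).Preconnected) (hC : IsCompOf (Glt D δ) C) {x' y' : X}
    (hx' : x' ∈ C) (hyx' : y' < x') (hd' : δ < D.d x' y') : C ∉ rightwardComps D δ := by
  rintro ⟨-, x, hx, y, -, hxy, hd⟩
  set K := {t | (Gdelta D δ).Reachable x t}
  have hK : IsCompOf (Gdelta D δ) K := ⟨x, rfl⟩
  have hCK : C ⊆ K := fun t ht => hC.reachable_Gdelta hx ht
  obtain ⟨q, hq⟩ := SimpleGraph.exists_not_reachable_of_not_preconnected hpre x
  -- `d(u, q) = δ` for `u ∈ K`, so a partner of `u` at distance `> δ` is not between `u` and `q`;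
  -- this puts `q` right of `x` and left of `x'`, hence inside `C`.
  have hfar : ∀ {u v : X}, u ∈ K → δ < D.d u v → v ∉ uIcc u q := fun hu huv hv =>
    (hc.dist_le_of_mem_uIcc hv).not_gt (hK.dist_eq hu hq ▸ huv)
  have hxq : x < q := by
    by_contra! hqx
    exact hfar (hK.mem_of_dist_ne (hCK hx) hd.ne') (D.symm x y ▸ hd)
      (uIcc_comm q y ▸ Icc_subset_uIcc ⟨hqx, hxy.le⟩)
  have hqx' : q < x' := by
    by_contra! hxq'
    exact hfar (hK.mem_of_dist_ne (hCK hx') hd'.ne') (D.symm x' y' ▸ hd')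
      (Icc_subset_uIcc ⟨hyx'.le, hxq'⟩)
  exact hq (hCK ((hC.ordConnected_of_compatible hc).out hx hx' ⟨hxq.le, hqx'.le⟩))

lemma bigGraph_adj_mem_rightwardComps_iff (hc : Compatible D (· < ·))
    (hpre : ¬ (Gdelta D δ).Preconnected) (hCC' : (bigGraph D δ (crossedComps D δ)).Adj C C') :
    C ∈ rightwardComps D δ ↔ C' ∉ rightwardComps D δ := by
  obtain ⟨hC, hC', hne, x, hx, y, hy, hd⟩ := hCC'
  have hyC : y ∉ C := fun h => hne (hC.1.eq_of_mem hC'.1 h hy)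
  have hxC' : x ∉ C' := fun h => hne (hC.1.eq_of_mem hC'.1 hx h)
  have hd' : δ < D.d y x := D.symm x y ▸ hd
  rcases lt_or_gt_of_ne (fun h : x = y => hyC (h ▸ hx)) with hxy | hyx
  · exact iff_of_true ⟨hC, x, hx, y, hyC, hxy, hd⟩
      (notMem_rightwardComps_of_leftward_pair hc hpre hC'.1 hy hxy hd')
  · exact iff_of_false (notMem_rightwardComps_of_leftward_pair hc hpre hC.1 hx hyx hd)
      (not_not.mpr ⟨hC', y, hy, x, hxC', hyx, hd'⟩)

lemma exists_bipartition_bigGraph (hc : Compatible D (· < ·))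
    (hpre : ¬ (Gdelta D δ).Preconnected) :
    ∃ A B : Set (Set X), A ∪ B = crossedComps D δ ∧ Disjoint A B ∧
      (∀ C ∈ A, ∀ C' ∈ A, ¬ (bigGraph D δ (crossedComps D δ)).Adj C C') ∧
      (∀ C ∈ B, ∀ C' ∈ B, ¬ (bigGraph D δ (crossedComps D δ)).Adj C C') := by
  refine ⟨rightwardComps D δ, crossedComps D δ \ rightwardComps D δ,
    union_sdiff_cancel (sep_subset _ _), disjoint_sdiff_right, ?_, ?_⟩
  · exact fun C _ C' hC' hCC' => (bigGraph_adj_mem_rightwardComps_iff hc hpre hCC').mp ‹_› hC'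
  · exact fun C hC C' hC' hCC' =>
      hC.2 ((bigGraph_adj_mem_rightwardComps_iff hc hpre hCC').mpr hC'.2)

end Robinson

theorem stmt15_general [Fintype X] (D : Dissim X)
    (hRob : Robinson D)
    (δstar : ℝ)
    (hnc : ¬ (Gdelta D δstar).Connected)
    (I : Set (Set X))
    (hI : I = {C : Set X | IsCompOf (Glt D δstar) C ∧ ¬ IsCompOf (Gdelta D δstar) C}) :
    I.ncard ≠ 1 ∧
    (I.Nonempty →
      (IsCompOf (Gdelta D δstar) (⋃₀ I) ∧ δstar < diam D (⋃₀ I)) ∧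
      MMax D =
        ((fun C : Set X => Cᶜ) '' ({C : Set X | IsCompOf (Glt D δstar) C} \ I)) ∪
          {(⋃₀ I)ᶜ} ∧
      ConnectedWithin (bigGraph D δstar I) I ∧
      ∃ A B : Set (Set X), A ∪ B = I ∧ Disjoint A B ∧
        (∀ C ∈ A, ∀ C' ∈ A, ¬ (bigGraph D δstar I).Adj C C') ∧
        (∀ C ∈ B, ∀ C' ∈ B, ¬ (bigGraph D δstar I).Adj C C')) := by
  obtain rfl : I = crossedComps D δstar := hI
  obtain ⟨lt, hsto, hc⟩ := hRob
  classical
  -- The `<` of this order is `lt` itself, so `hc` is compatibility with `<`.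
  let _ : LinearOrder X := linearOrderOfSTO lt
  refine ⟨ncard_crossedComps_ne_one, fun hne => ?_⟩
  have hpre : ¬ (Gdelta D δstar).Preconnected := fun h =>
    hnc ((SimpleGraph.connected_iff _).mpr ⟨h, ⟨hne.some_mem.1.nonempty.some⟩⟩)
  have hconn := connectedWithin_bigGraph hc hne
  have hS := isCompOf_sUnion_crossedComps hconn
  refine ⟨⟨hS, lt_diam_sUnion_crossedComps hne⟩, ?_, hconn, exists_bipartition_bigGraph hc hpre⟩
  rw [MMax_eq_image_compl hpre, setOf_isCompOf_Gdelta_eq hS, image_union, image_singleton]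

/-- let I be the set of components of G_{<δ*} that are not components
of G_{δ*}. Then |I| ≠ 1 and, when I is nonempty, S₀ := ⋃ I is a component of
G_{δ*} of diameter > δ*, the maximal mmodules are the complements of the
components of G_{<δ*} outside I together with the complement of S₀, and the
graph H on I (with edges between components containing points at distance > δ*)
is connected and bipartite. -/
theorem stmt15 [Fintype X] [Nonempty X] (D : Dissim X)
    (hpos : ∀ x y : X, x ≠ y → 0 < D.d x y)
    (hRob : Robinson D)
    (δstar : ℝ)
    (hls : IsLeast {δ : ℝ | 0 < δ ∧ (Gle D δ).Connected} δstar)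
    (hnc : ¬ (Gdelta D δstar).Connected)
    (I : Set (Set X))
    (hI : I = {C : Set X | IsCompOf (Glt D δstar) C ∧ ¬ IsCompOf (Gdelta D δstar) C}) :
    I.ncard ≠ 1 ∧
    (I.Nonempty →
      (IsCompOf (Gdelta D δstar) (⋃₀ I) ∧ δstar < diam D (⋃₀ I)) ∧
      MMax D =
        ((fun C : Set X => Cᶜ) '' ({C : Set X | IsCompOf (Glt D δstar) C} \ I)) ∪
          {(⋃₀ I)ᶜ} ∧
      ConnectedWithin (bigGraph D δstar I) I ∧
      ∃ A B : Set (Set X), A ∪ B = I ∧ Disjoint A B ∧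
        (∀ C ∈ A, ∀ C' ∈ A, ¬ (bigGraph D δstar I).Adj C C') ∧
        (∀ C ∈ B, ∀ C' ∈ B, ¬ (bigGraph D δstar I).Adj C C')) :=
  stmt15_general D hRob δstar hnc I hI
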